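/- Let n ≥ 2, J > 0 and H ∈ ℝ, and let P̃ be the (n+1)×(n+1) magnetization chain matrix of the mean-field Glauber dynamics. Let λ₂ be the second-largest eigenvalue of the full Glauber chain. If f = (f_0,…,f_n) is an increasing eigenvector of P̃ with eigenvalue λ₂ (P̃f = λ₂f, f_k ≤ f_{k+1} for all k, f not constant), then f is strictly increasing at every index: f_k < f_{k+1} for all 0 ≤ k ≤ n−1. -/
import Mathlib


/-- The spin value of a site: `+1` for `true`, `-1` for `false`. -/
def spin (b : Bool) : ℝ := if b then 1 else -1

/-- The rate at which the Glauber dynamics for the mean-field Ising model on the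
complete graph with `n` vertices, coupling `J` and uniform external field `H`
flips the spin at vertex `x` of the configuration `σ`:
`(1/n) · 1/(1 + exp(−2 σ'_x (J Σ_{y≠x} σ_y + H)))` where `σ'_x = −σ_x`. -/
noncomputable def flipRate (n : ℕ) (J H : ℝ) (σ : Fin n → Bool) (x : Fin n) : ℝ :=
  (1 / (n : ℝ)) *
    (1 + Real.exp (-2 * spin (!σ x) *
      (J * ∑ y ∈ Finset.univ.erase x, spin (σ y) + H)))⁻¹

/-- The transition matrix of the Glauber dynamics for the mean-field Ising model on
the complete graph with `n` vertices, coupling `J` and uniform external field `H`.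
Transitions change at most one coordinate. -/
noncomputable def glauberP (n : ℕ) (J H : ℝ) : Matrix (Fin n → Bool) (Fin n → Bool) ℝ :=
  fun σ σ' =>
    if σ' = σ then 1 - ∑ x : Fin n, flipRate n J H σ x
    else ∑ x : Fin n, if σ' = Function.update σ x (!σ x) then flipRate n J H σ x else 0

/-- `μ` is a (real) eigenvalue of the matrix `M`. -/
def IsEigenvalue {m : Type*} [Fintype m] (M : Matrix m m ℝ) (μ : ℝ) : Prop :=
  ∃ v : m → ℝ, v ≠ 0 ∧ M.mulVec v = μ • v

/-- `μ` is the second-largest eigenvalue of the transition matrix `M` whose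
eigenvalues are real and satisfy `1 = λ₁ > λ₂ ≥ … ≥ λ_N`: it is the largest
eigenvalue different from `1`. -/
def IsSecondEigenvalue {m : Type*} [Fintype m] (M : Matrix m m ℝ) (μ : ℝ) : Prop :=
  IsEigenvalue M μ ∧ μ ≠ 1 ∧ ∀ μ' : ℝ, IsEigenvalue M μ' → μ' ≠ 1 → μ' ≤ μ


/-- Upward transition rate of the magnetization chain:
`P̃_{k,k+1} = ((n−k)/n) · 1/(1 + exp((n−2k−1)·2J − 2H))`. -/
noncomputable def pUp (n : ℕ) (J H : ℝ) (k : ℕ) : ℝ :=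
  (((n : ℝ) - k) / n) * (1 + Real.exp (((n : ℝ) - 2 * k - 1) * (2 * J) - 2 * H))⁻¹

/-- Downward transition rate of the magnetization chain:
`P̃_{k,k−1} = (k/n) · 1/(1 + exp(−(n−2k+1)·2J + 2H))`. -/
noncomputable def pDown (n : ℕ) (J H : ℝ) (k : ℕ) : ℝ :=
  ((k : ℝ) / n) * (1 + Real.exp (-((n : ℝ) - 2 * k + 1) * (2 * J) + 2 * H))⁻¹

/-- The `(n+1)×(n+1)` tridiagonal transition matrix of the magnetization chain
associated to the mean-field Glauber dynamics.  (Note `pDown n J H 0 = 0` and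
`pUp n J H n = 0`, implementing the conventions `P̃_{0,−1} = P̃_{n,n+1} = 0`.) -/
noncomputable def magP (n : ℕ) (J H : ℝ) : Matrix (Fin (n + 1)) (Fin (n + 1)) ℝ :=
  fun k l =>
    if (l : ℕ) = (k : ℕ) + 1 then pUp n J H k
    else if (k : ℕ) = (l : ℕ) + 1 then pDown n J H k
    else if k = l then 1 - pDown n J H k - pUp n J H k
    else 0


section Aux

variable (n : ℕ) (J H : ℝ)

lemma pUp_nonneg (k : ℕ) (hk : k ≤ n) : 0 ≤ pUp n J H k := by
  unfold pUp
  have h1 : (0:ℝ) ≤ ((n:ℝ) - k) := by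
    have : (k:ℝ) ≤ n := by exact_mod_cast hk
    linarith
  have h2 : (0:ℝ) < 1 + Real.exp (((n : ℝ) - 2 * k - 1) * (2 * J) - 2 * H) := by
    positivity
  positivity

lemma pUp_pos (k : ℕ) (hk : k < n) : 0 < pUp n J H k := by
  unfold pUp
  have h1 : (0:ℝ) < ((n:ℝ) - k) := by
    have : (k:ℝ) < n := by exact_mod_cast hk
    linarith
  have hnn : (0:ℝ) < n := by
    have : 0 < n := by omega
    exact_mod_cast this
  have h2 : (0:ℝ) < 1 + Real.exp (((n : ℝ) - 2 * k - 1) * (2 * J) - 2 * H) := by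
    positivity
  positivity

lemma pDown_nonneg (k : ℕ) : 0 ≤ pDown n J H k := by
  unfold pDown
  have h2 : (0:ℝ) < 1 + Real.exp (-((n : ℝ) - 2 * k + 1) * (2 * J) + 2 * H) := by
    positivity
  positivity

lemma pDown_pos (k : ℕ) (hk : 1 ≤ k) (hn : 0 < n) : 0 < pDown n J H k := by
  unfold pDown
  have h1 : (0:ℝ) < k := by exact_mod_cast hk
  have hnn : (0:ℝ) < n := by exact_mod_cast hn
  have h2 : (0:ℝ) < 1 + Real.exp (-((n : ℝ) - 2 * k + 1) * (2 * J) + 2 * H) := by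
    positivity
  positivity

lemma pUp_self : pUp n J H n = 0 := by
  unfold pUp; simp

lemma pDown_zero : pDown n J H 0 = 0 := by
  unfold pDown; simp

/-- `f` extended to `ℕ` by clamping the index at `n`. -/
noncomputable def clampF (f : Fin (n + 1) → ℝ) : ℕ → ℝ :=
  fun j => f ⟨min j n, by omega⟩

lemma clampF_eq (f : Fin (n + 1) → ℝ) (l : Fin (n + 1)) : clampF n f (l : ℕ) = f l := by
  unfold clampF
  congr 1
  exact Fin.ext (by have := l.is_lt; simp; omega)

lemma clampF_top (f : Fin (n + 1) → ℝ) (j : ℕ) (hj : n ≤ j) :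
    clampF n f j = clampF n f n := by
  unfold clampF
  congr 1
  exact Fin.ext (by simp; omega)

end Aux

lemma magP_row (n : ℕ) (J H : ℝ) (f : Fin (n + 1) → ℝ) (k : ℕ) (hk : k ≤ n) :
    (magP n J H).mulVec f ⟨k, by omega⟩ =
      pUp n J H k * clampF n f (k + 1) + pDown n J H k * clampF n f (k - 1)
        + (1 - pDown n J H k - pUp n J H k) * clampF n f k := by
  have hpt : ∀ l : Fin (n + 1), magP n J H ⟨k, by omega⟩ l * f l =
      (if (l : ℕ) = k + 1 then pUp n J H k * clampF n f (l : ℕ) else 0)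
      + (if k = (l : ℕ) + 1 then pDown n J H k * clampF n f (l : ℕ) else 0)
      + (if (l : ℕ) = k then (1 - pDown n J H k - pUp n J H k) * clampF n f (l : ℕ) else 0) := by
    intro l
    rw [clampF_eq]
    simp only [magP, Fin.ext_iff]
    split_ifs <;> first | ring1 | (exfalso; omega)
  have hsum : (magP n J H).mulVec f ⟨k, by omega⟩ =
      ∑ j ∈ Finset.range (n + 1),
        ((if j = k + 1 then pUp n J H k * clampF n f j else 0)
        + (if k = j + 1 then pDown n J H k * clampF n f j else 0)
        + (if j = k then (1 - pDown n J H k - pUp n J H k) * clampF n f j else 0)) := by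
    rw [← Fin.sum_univ_eq_sum_range]
    simp only [Matrix.mulVec, dotProduct]
    exact Finset.sum_congr rfl (fun l _ => hpt l)
  rw [hsum, Finset.sum_add_distrib, Finset.sum_add_distrib]
  have h1 : (∑ j ∈ Finset.range (n + 1), if j = k + 1 then pUp n J H k * clampF n f j else 0)
      = pUp n J H k * clampF n f (k + 1) := by
    rw [Finset.sum_ite_eq' (Finset.range (n + 1)) (k + 1)]
    by_cases hkn : k < n
    · have hm : k + 1 ∈ Finset.range (n + 1) := Finset.mem_range.mpr (by omega)
      rw [if_pos hm]
    · have hkn' : k = n := by omega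
      rw [if_neg (by simp [hkn']), hkn', pUp_self n J H]
      ring
  have h2 : (∑ j ∈ Finset.range (n + 1), if k = j + 1 then pDown n J H k * clampF n f j else 0)
      = pDown n J H k * clampF n f (k - 1) := by
    rcases k with _ | m
    · rw [Finset.sum_eq_zero (fun j _ => by rw [if_neg (by omega)]), pDown_zero]
      ring
    · have hcond : ∀ j, (m + 1 = j + 1) = (j = m) := by
        intro j
        simp only [eq_iff_iff]
        constructor <;> intro <;> omega
      simp only [hcond]
      have hm : m ∈ Finset.range (n + 1) := Finset.mem_range.mpr (by omega)
      rw [Finset.sum_ite_eq' (Finset.range (n + 1)) m, if_pos hm]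
      norm_num
  have h3 : (∑ j ∈ Finset.range (n + 1),
        if j = k then (1 - pDown n J H k - pUp n J H k) * clampF n f j else 0)
      = (1 - pDown n J H k - pUp n J H k) * clampF n f k := by
    have hm : k ∈ Finset.range (n + 1) := Finset.mem_range.mpr (by omega)
    rw [Finset.sum_ite_eq' (Finset.range (n + 1)) k, if_pos hm]
  rw [h1, h2, h3]

/-- Any nonconstant increasing eigenvector of the magnetization chain `P̃` for the
second-largest eigenvalue `λ₂` of the full Glauber chain is strictly increasing at
every index. -/
theorem magP_increasing_eigenvector_strict
    (n : ℕ) (hn : 2 ≤ n) (J H : ℝ) (hJ : 0 < J) (lam : ℝ)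
    (hlam : IsSecondEigenvalue (glauberP n J H) lam)
    (f : Fin (n + 1) → ℝ)
    (hf : (magP n J H).mulVec f = lam • f)
    (hfinc : ∀ k : Fin n, f k.castSucc ≤ f k.succ)
    (hfnc : ¬ ∀ k l : Fin (n + 1), f k = f l) :
    ∀ k : Fin n, f k.castSucc < f k.succ := by
  intro k
  by_contra hlt
  have heq0 : f k.castSucc = f k.succ := le_antisymm (hfinc k) (not_lt.mp hlt)
  set g := clampF n f with hg
  have hlam1 : lam ≠ 1 := hlam.2.1
  have hval : ∀ (j : ℕ) (hj : j < n + 1), f ⟨j, hj⟩ = g j := by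
    intro j hj
    rw [hg]
    unfold clampF
    congr 1
    exact Fin.ext (by simp; omega)
  have gstep : ∀ j : ℕ, g j ≤ g (j + 1) := by
    intro j
    by_cases hj : j < n
    · have h1 : f (Fin.castSucc ⟨j, hj⟩) = g j := by
        rw [← hval j (by omega)]; rfl
      have h2 : f (Fin.succ ⟨j, hj⟩) = g (j + 1) := by
        rw [← hval (j + 1) (by omega)]; rfl
      rw [← h1, ← h2]; exact hfinc ⟨j, hj⟩
    · rw [hg, clampF_top n f j (by omega), clampF_top n f (j + 1) (by omega)]
  have gmono : Monotone g := monotone_nat_of_le_succ gstep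
  have row : ∀ j : ℕ, j ≤ n →
      pDown n J H j * (g (j - 1) - g j) + pUp n J H j * (g (j + 1) - g j)
        = (lam - 1) * g j := by
    intro j hj
    have h1 := magP_row n J H f j hj
    have h2 : (magP n J H).mulVec f ⟨j, by omega⟩ = lam * f ⟨j, by omega⟩ := by
      rw [hf]; rfl
    rw [h1, hval j (by omega)] at h2
    rw [hg] at *
    linear_combination h2
  have step : ∀ j : ℕ, j + 1 ≤ n → g j = g (j + 1) →
      g j = 0 ∧ g (j + 1) = 0 ∧ (1 ≤ j → g (j - 1) = g j) ∧
        (j + 2 ≤ n → g (j + 1) = g (j + 2)) := by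
    intro j hj1 hje
    have rA := row j (by omega)
    have rB := row (j + 1) hj1
    have e1 : g (j + 1) - g j = 0 := by rw [← hje, sub_self]
    have rA' : pDown n J H j * (g (j - 1) - g j) = (lam - 1) * g j := by
      linear_combination rA - pUp n J H j * e1
    have e3 : g j - g (j + 1) = 0 := by rw [hje, sub_self]
    have e4 : (j + 1 : ℕ) - 1 = j := rfl
    rw [e4] at rB
    have rB' : pUp n J H (j + 1) * (g (j + 2) - g (j + 1)) = (lam - 1) * g j := by
      linear_combination rB - pDown n J H (j + 1) * e3 - (lam - 1) * hje
    have hA_le : pDown n J H j * (g (j - 1) - g j) ≤ 0 :=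
      mul_nonpos_of_nonneg_of_nonpos (pDown_nonneg n J H j)
        (sub_nonpos.mpr (gmono (Nat.sub_le j 1)))
    have hB_ge : 0 ≤ pUp n J H (j + 1) * (g (j + 2) - g (j + 1)) :=
      mul_nonneg (pUp_nonneg n J H (j + 1) hj1) (sub_nonneg.mpr (gmono (by omega)))
    have hz : (lam - 1) * g j = 0 := by
      have h1 : (lam - 1) * g j ≤ 0 := by rw [← rA']; exact hA_le
      have h2 : 0 ≤ (lam - 1) * g j := by rw [← rB']; exact hB_ge
      linarith
    have hgj : g j = 0 := by
      rcases mul_eq_zero.mp hz with h | h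
      · exact absurd (by linarith : lam = 1) hlam1
      · exact h
    refine ⟨hgj, by rw [← hje]; exact hgj, ?_, ?_⟩
    · intro hj0
      have hzz : pDown n J H j * (g (j - 1) - g j) = 0 := by rw [rA', hgj, mul_zero]
      have hp := pDown_pos n J H j hj0 (by omega)
      rcases mul_eq_zero.mp hzz with h | h
      · linarith
      · linarith [sub_eq_zero.mp h]
    · intro hj2
      have hzz : pUp n J H (j + 1) * (g (j + 2) - g (j + 1)) = 0 := by
        rw [rB', hgj, mul_zero]
      have hp := pUp_pos n J H (j + 1) (by omega)
      rcases mul_eq_zero.mp hzz with h | h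
      · linarith
      · linarith [sub_eq_zero.mp h]
  have hkisl := k.is_lt
  have heqg : g (k : ℕ) = g ((k : ℕ) + 1) := by
    have h1 : f k.castSucc = g (k : ℕ) := by
      rw [← hval (k : ℕ) (by omega)]; rfl
    have h2 : f k.succ = g ((k : ℕ) + 1) := by
      rw [← hval ((k : ℕ) + 1) (by omega)]; rfl
    rw [← h1, ← h2]; exact heq0
  have down : ∀ m : ℕ, m ≤ (k : ℕ) → g ((k : ℕ) - m) = g ((k : ℕ) - m + 1) := by
    intro m
    induction m with
    | zero => intro _; simpa using heqg
    | succ p ih =>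
      intro hp
      have hprev := ih (by omega)
      have hc := (step ((k : ℕ) - p) (by omega) hprev).2.2.1 (by omega)
      have e : (k : ℕ) - (p + 1) = (k : ℕ) - p - 1 := by omega
      have e2 : (k : ℕ) - p - 1 + 1 = (k : ℕ) - p := by omega
      rw [e, e2]; exact hc
  have up : ∀ m : ℕ, (k : ℕ) + m + 1 ≤ n → g ((k : ℕ) + m) = g ((k : ℕ) + m + 1) := by
    intro m
    induction m with
    | zero => intro _; simpa using heqg
    | succ p ih =>
      intro hp
      have hprev := ih (by omega)
      have hc := (step ((k : ℕ) + p) (by omega) hprev).2.2.2 (by omega)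
      have e : (k : ℕ) + (p + 1) = (k : ℕ) + p + 1 := rfl
      rw [e]; exact hc
  have adj : ∀ j : ℕ, j + 1 ≤ n → g j = g (j + 1) := by
    intro j hj
    rcases le_or_gt j (k : ℕ) with h | h
    · have hd := down ((k : ℕ) - j) (by omega)
      have e : (k : ℕ) - ((k : ℕ) - j) = j := by omega
      rw [e] at hd; exact hd
    · have hu := up (j - (k : ℕ)) (by omega)
      have e : (k : ℕ) + (j - (k : ℕ)) = j := by omega
      rw [e] at hu; exact hu
  have zero : ∀ j : ℕ, j ≤ n → g j = 0 := by
    intro j hj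
    rcases lt_or_eq_of_le hj with h | h
    · exact (step j (by omega) (adj j (by omega))).1
    · have h1 := (step (n - 1) (by omega) (adj (n - 1) (by omega))).2.1
      have e : n - 1 + 1 = n := by omega
      rw [e] at h1
      rw [h]; exact h1
  apply hfnc
  intro a b
  have ha := a.is_lt
  have hb := b.is_lt
  rw [← clampF_eq n f a, ← clampF_eq n f b]
  rw [← hg]
  rw [zero (a : ℕ) (by omega), zero (b : ℕ) (by omega)]
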